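/- Let k be a field of characteristic p > 0. Then the maximal perfect subfield of the Laurent series field k((t)) equals the maximal perfect subfield of k, i.e. k((t))^{p^∞} = k^{p^∞}. -/

import Mathlib

/-!
A nonzero Laurent series `f` with a `p ^ n`-th root for every `n` has order divisible by every
`p ^ n`, hence order `0`; its constant coefficient is then its leading coefficient, which is a
`p ^ n`-th power for every `n` since leading coefficients are multiplicative. Subtracting this
constant from an element `f` of the perfect core leaves an element of the perfect core with
vanishing constant coefficient, which can therefore not have order `0`, so it is zero.
-/

/-- The maximal perfect subfield `L^{p^∞} = ⋂_n L^{p^n}` of a field `L`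
(in characteristic `p`, `Subfield.closure (Set.range (· ^ p ^ n))` is exactly the subfield of
`p^n`-th powers). -/
def perfectCore (L : Type*) [Field L] (p : ℕ) : Subfield L :=
  ⨅ n : ℕ, Subfield.closure (Set.range (· ^ p ^ n))

section perfectCore

variable {K L : Type*} [Field K] [Field L] {p : ℕ}

theorem mem_perfectCore_iff [ExpChar L p] {x : L} :
    x ∈ perfectCore L p ↔ ∀ n : ℕ, ∃ y : L, y ^ p ^ n = x := by
  -- the field range of the iterated Frobenius is definitionally the set of `p ^ n`-th powers
  have hclosure (n : ℕ) :
      Subfield.closure (Set.range (· ^ p ^ n)) = (iterateFrobenius L p n).fieldRange :=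
    Subfield.closure_eq (iterateFrobenius L p n).fieldRange
  simp only [perfectCore, Subfield.mem_iInf, hclosure, RingHom.mem_fieldRange,
    iterateFrobenius_def]

theorem map_perfectCore_le (f : K →+* L) : (perfectCore K p).map f ≤ perfectCore L p := by
  rw [perfectCore, Subfield.map_iInf]
  refine iInf_mono fun n => ?_
  rw [RingHom.map_field_closure]
  refine Subfield.closure_mono ?_
  rintro _ ⟨_, ⟨y, rfl⟩, rfl⟩
  exact ⟨f y, (map_pow f y _).symm⟩

end perfectCore

namespace HahnSeries

theorem leadingCoeff_pow {Γ R : Type*} [AddCommMonoid Γ] [LinearOrder Γ]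
    [IsOrderedCancelAddMonoid Γ] [Semiring R] [NoZeroDivisors R] (x : HahnSeries Γ R) (n : ℕ) :
    (x ^ n).leadingCoeff = x.leadingCoeff ^ n := by
  induction n with
  | zero => simp
  | succ n ih => rw [pow_succ, leadingCoeff_mul, ih, pow_succ]

end HahnSeries

namespace LaurentSeries

variable {R : Type*} [Semiring R] [NoZeroDivisors R] {p : ℕ} {f : LaurentSeries R}

theorem order_eq_zero_of_forall_exists_pow_eq (hp : 1 < p) (hf0 : f ≠ 0)
    (hf : ∀ n : ℕ, ∃ g : LaurentSeries R, g ^ p ^ n = f) : f.order = 0 := by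
  have hdvd (n : ℕ) : (p : ℤ) ^ n ∣ f.order := by
    obtain ⟨g, rfl⟩ := hf n
    exact ⟨g.order, by simp⟩
  refine Int.eq_zero_of_abs_lt_dvd (hdvd f.order.natAbs) ?_
  rw [Int.abs_eq_natAbs]
  exact_mod_cast Nat.lt_pow_self hp

theorem forall_exists_pow_eq_coeff_zero (hp : 1 < p)
    (hf : ∀ n : ℕ, ∃ g : LaurentSeries R, g ^ p ^ n = f) (n : ℕ) :
    ∃ a : R, a ^ p ^ n = f.coeff 0 := by
  rcases eq_or_ne f 0 with rfl | hf0
  · exact ⟨0, zero_pow (pow_ne_zero n (by omega))⟩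
  obtain ⟨g, rfl⟩ := hf n
  refine ⟨g.leadingCoeff, ?_⟩
  rw [← HahnSeries.leadingCoeff_pow, HahnSeries.leadingCoeff_eq,
    order_eq_zero_of_forall_exists_pow_eq hp hf0 hf]

theorem eq_zero_of_forall_exists_pow_eq_of_coeff_zero (hp : 1 < p)
    (hf : ∀ n : ℕ, ∃ g : LaurentSeries R, g ^ p ^ n = f) (h0 : f.coeff 0 = 0) : f = 0 := by
  by_contra hf0
  rw [← order_eq_zero_of_forall_exists_pow_eq hp hf0 hf, HahnSeries.coeff_order_eq_zero] at h0
  exact hf0 h0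

end LaurentSeries

/-- For a field `k` of characteristic `p > 0`, the maximal perfect subfield
of the Laurent series field `k((t))` equals (the image of) the maximal perfect subfield of
`k`: `k((t))^{p^∞} = k^{p^∞}`. -/
theorem perfectCore_laurentSeries {k : Type u} [Field k] (p : ℕ) (hp : p.Prime) [CharP k p] :
    perfectCore (LaurentSeries k) p =
      (perfectCore k p).map (algebraMap k (LaurentSeries k)) := by
  have := Fact.mk hp
  have : CharP (LaurentSeries k) p :=
    charP_of_injective_algebraMap (algebraMap k (LaurentSeries k)).injective p
  refine le_antisymm (fun f hf => ?_) (map_perfectCore_le _)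
  have hcoeff : f.coeff 0 ∈ perfectCore k p :=
    mem_perfectCore_iff.2 <|
      LaurentSeries.forall_exists_pow_eq_coeff_zero hp.one_lt (mem_perfectCore_iff.1 hf)
  have hC : algebraMap k (LaurentSeries k) (f.coeff 0) ∈ perfectCore (LaurentSeries k) p :=
    map_perfectCore_le _ ⟨_, hcoeff, rfl⟩
  have hsub : f - algebraMap k (LaurentSeries k) (f.coeff 0) = 0 :=
    LaurentSeries.eq_zero_of_forall_exists_pow_eq_of_coeff_zero hp.one_lt
      (mem_perfectCore_iff.1 (sub_mem hf hC)) (by simp [LaurentSeries.algebraMap_apply])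
  exact ⟨f.coeff 0, hcoeff, (sub_eq_zero.1 hsub).symm⟩
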